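/- Let A = (a_{ij}) be an n×n real matrix and let E = {(i_l, j_l) : l = 1,…,k} be a nonempty set of distinct pairs in {1,…,n}×{1,…,n} with i₁ ≤ i₂ ≤ … ≤ i_k and with a_{i_l j_l} ≠ 0 for each l. Fix p ∈ {1,…,k} and set E_p := E\{(i_p,j_p)} and E̅_p := {(i_p,j_p)}. Then det(E[A]) · det(A) = det(E_p[A]) · det(E̅_p[A]) − Σ_{1≤l≤k, l≠p} (−1)^{i_l+j_l+i_p+j_p} · a_{i_p j_p} · a_{i_l j_l} · det(E[A]_{i_p j_l}) · det(A_{i_l j_p}). -/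

import Mathlib

open Matrix

/-- The `(n−1) × (n−1)` minor matrix of an `n × n` matrix obtained by deleting
row `i` and column `j` (keeping the remaining indices in increasing order). -/
noncomputable def minorRC {n : ℕ} (A : Matrix (Fin n) (Fin n) ℝ) (i j : Fin n) :
    Matrix (Fin (n - 1)) (Fin (n - 1)) ℝ :=
  A.submatrix
    (({i}ᶜ : Finset (Fin n)).orderEmbOfFin
      (by rw [Finset.card_compl, Fintype.card_fin, Finset.card_singleton]))
    (({j}ᶜ : Finset (Fin n)).orderEmbOfFin
      (by rw [Finset.card_compl, Fintype.card_fin, Finset.card_singleton]))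

/-- Given a family of pairs `(I l, J l)` indexed by `l : Fin k` and a predicate `P`
selecting some of them, `zeroEntries A P I J` is the matrix obtained from `A` by
replacing the `(I l, J l)`-entry by `0` for every `l` with `P l`, leaving all
other entries unchanged.  Taking `P := fun _ => True` gives the matrix `E[A]`
of the paper. -/
def zeroEntries {n k : ℕ} (A : Matrix (Fin n) (Fin n) ℝ) (P : Fin k → Prop)
    [DecidablePred P] (I J : Fin k → Fin n) : Matrix (Fin n) (Fin n) ℝ := fun s t =>
  if ∃ l, P l ∧ s = I l ∧ t = J l then 0 else A s t

lemma updateRow_congr' {n : ℕ} (M N : Matrix (Fin n) (Fin n) ℝ) (i : Fin n)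
    (h : ∀ s t, s ≠ i → M s t = N s t) (r : Fin n → ℝ) :
    M.updateRow i r = N.updateRow i r := by
  ext s t
  by_cases hs : s = i
  · simp [hs]
  · simp [Matrix.updateRow_apply, hs, h s t hs]

lemma det_updateEntry {n : ℕ} (M : Matrix (Fin n) (Fin n) ℝ) (i j : Fin n) (x : ℝ) :
    (M.updateRow i (Function.update (M i) j x)).det
      = (M.updateRow i (Function.update (M i) j 0)).det + x * M.adjugate j i := by
  have h : Function.update (M i) j x
      = Function.update (M i) j 0 + x • (Pi.single j 1 : Fin n → ℝ) := by
    ext t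
    by_cases ht : t = j
    · subst ht; simp
    · simp [Function.update_apply, ht, Pi.single_apply]
  rw [h, det_updateRow_add, det_updateRow_smul, adjugate_apply]

lemma minorRC_eq {m : ℕ} (A : Matrix (Fin (m+1)) (Fin (m+1)) ℝ) (i j : Fin (m+1)) :
    minorRC A i j = A.submatrix i.succAbove j.succAbove := by
  have key : ∀ (i : Fin (m+1)) (h : ({i}ᶜ : Finset (Fin (m+1))).card = m + 1 - 1),
      ⇑(({i}ᶜ : Finset (Fin (m+1))).orderEmbOfFin h) = i.succAbove := by
    intro i h
    have := Finset.orderEmbOfFin_unique' h (f := i.succAboveOrderEmb)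
      (fun x => by simp [Fin.succAbove_ne])
    rw [← this]; rfl
  unfold minorRC
  rw [key, key]

lemma adj_eq {m : ℕ} (A : Matrix (Fin (m+1)) (Fin (m+1)) ℝ) (i j : Fin (m+1)) :
    A.adjugate j i = (-1 : ℝ)^((i : ℕ)+(j : ℕ)) * (minorRC A i j).det := by
  rw [adjugate_fin_succ_eq_det_submatrix, minorRC_eq]

lemma mul_std_mul {n : ℕ} (M N : Matrix (Fin n) (Fin n) ℝ) (i j : Fin n) (c : ℝ)
    (s t : Fin n) :
    (M * Matrix.single i j c * N) s t = M s i * c * N j t := by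
  rw [Matrix.mul_assoc, Matrix.mul_apply, Fintype.sum_eq_single i
    (fun u hu => by rw [Matrix.single_mul_apply_of_ne _ _ _ _ _ hu, mul_zero]),
    Matrix.single_mul_apply_same, mul_assoc]

/-- **Theorem 4.2.**  For an arbitrary `n × n` real matrix `A`, a nonempty set
`E = {(i_l, j_l) : l ∈ [k]}` of distinct pairs with `i₁ ≤ … ≤ i_k` and
`a_{i_l j_l} ≠ 0`, and any fixed `p ∈ [k]`:
`det(E[A])·det(A) = det(E_p[A])·det(E̅_p[A]) −
 Σ_{l ≠ p} (−1)^{i_l+j_l+i_p+j_p} a_{i_p j_p} a_{i_l j_l} det(E[A]_{i_p j_l}) det(A_{i_l j_p})`. -/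
theorem det_replacing {n k : ℕ} (A : Matrix (Fin n) (Fin n) ℝ)
    (I J : Fin k → Fin n) (hI : Monotone I)
    (hdist : Function.Injective (fun l => (I l, J l)))
    (hnz : ∀ l, A (I l) (J l) ≠ 0) (p : Fin k) :
    (zeroEntries A (fun _ => True) I J).det * A.det =
      (zeroEntries A (· ≠ p) I J).det * (zeroEntries A (· = p) I J).det -
        ∑ l ∈ Finset.univ.erase p,
          (-1 : ℝ) ^ ((I l).val + (J l).val + (I p).val + (J p).val) *
            A (I p) (J p) * A (I l) (J l) *
            (minorRC (zeroEntries A (fun _ => True) I J) (I p) (J l)).det *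
            (minorRC A (I l) (J p)).det := by
  rcases n with _ | m
  · exact (I p).elim0
  classical
  set B := zeroEntries A (fun _ => True) I J with hBdef
  set Ep := zeroEntries A (· ≠ p) I J with hEpdef
  set Eb := zeroEntries A (· = p) I J with hEbdef
  have hBa : ∀ s t, B s t = if ∃ l, s = I l ∧ t = J l then (0:ℝ) else A s t := by
    intro s t
    rw [hBdef]
    simp only [zeroEntries, true_and]
  have hEpa : ∀ s t, Ep s t
      = if ∃ l, l ≠ p ∧ s = I l ∧ t = J l then (0:ℝ) else A s t := by
    intro s t
    rw [hEpdef]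
    simp only [zeroEntries]
  have hEba : ∀ s t, Eb s t
      = if ∃ l, l = p ∧ s = I l ∧ t = J l then (0:ℝ) else A s t := by
    intro s t
    rw [hEbdef]
    simp only [zeroEntries]
  -- key matrix identities
  have hEbA : Eb.updateRow (I p) (Function.update (Eb (I p)) (J p) (A (I p) (J p))) = A := by
    ext s t
    by_cases hs : s = I p
    · rw [hs, Matrix.updateRow_self]
      by_cases ht : t = J p
      · rw [ht, Function.update_self]
      · rw [Function.update_of_ne ht, hEba, if_neg]
        rintro ⟨l, rfl, h1, h2⟩
        exact ht h2
    · rw [Matrix.updateRow_ne hs, hEba, if_neg]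
      rintro ⟨l, rfl, h1, h2⟩
      exact hs h1
  have hEb0 : Function.update (Eb (I p)) (J p) (0:ℝ) = Eb (I p) := by
    ext t
    by_cases ht : t = J p
    · rw [ht, Function.update_self, hEba, if_pos ⟨p, rfl, rfl, rfl⟩]
    · rw [Function.update_of_ne ht]
  have hB0 : Function.update (B (I p)) (J p) (0:ℝ) = B (I p) := by
    ext t
    by_cases ht : t = J p
    · rw [ht, Function.update_self, hBa, if_pos ⟨p, rfl, rfl⟩]
    · rw [Function.update_of_ne ht]
  have hEpB : B.updateRow (I p) (Function.update (B (I p)) (J p) (A (I p) (J p))) = Ep := by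
    ext s t
    by_cases hs : s = I p
    · rw [hs, Matrix.updateRow_self, hEpa]
      by_cases ht : t = J p
      · rw [ht, Function.update_self, if_neg]
        rintro ⟨l, hlp, h1, h2⟩
        exact hlp (hdist (show (I l, J l) = (I p, J p) by rw [← h1, ← h2]))
      · rw [Function.update_of_ne ht, hBa]
        by_cases hex : ∃ l, I p = I l ∧ t = J l
        · obtain ⟨l, h1, h2⟩ := hex
          rw [if_pos ⟨l, h1, h2⟩, if_pos ⟨l, fun hlp => ht (by subst hlp; exact h2), h1, h2⟩]
        · rw [if_neg hex, if_neg fun ⟨l, _, h1, h2⟩ => hex ⟨l, h1, h2⟩]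
    · rw [Matrix.updateRow_ne hs, hBa, hEpa]
      by_cases hex : ∃ l, s = I l ∧ t = J l
      · obtain ⟨l, h1, h2⟩ := hex
        rw [if_pos ⟨l, h1, h2⟩, if_pos ⟨l, fun hlp => hs (by subst hlp; exact h1), h1, h2⟩]
      · rw [if_neg hex, if_neg fun ⟨l, _, h1, h2⟩ => hex ⟨l, h1, h2⟩]
  have hadjEb : Eb.adjugate (J p) (I p) = A.adjugate (J p) (I p) := by
    rw [adjugate_apply, adjugate_apply]
    refine congrArg Matrix.det (updateRow_congr' _ _ _ (fun s t hs => ?_) _)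
    rw [hEba, if_neg]
    rintro ⟨l, rfl, h1, h2⟩
    exact hs h1
  have hdetA : A.det = Eb.det + A (I p) (J p) * A.adjugate (J p) (I p) := by
    conv_lhs => rw [← hEbA]
    rw [det_updateEntry, hEb0, Matrix.updateRow_eq_self, hadjEb]
  have hdetEp : Ep.det = B.det + A (I p) (J p) * B.adjugate (J p) (I p) := by
    rw [← hEpB, det_updateEntry, hB0, Matrix.updateRow_eq_self]
  have hAB : A - B = ∑ l : Fin k, Matrix.single (I l) (J l) (A (I l) (J l)) := by
    ext s t
    rw [Matrix.sub_apply, Matrix.sum_apply, hBa]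
    by_cases hex : ∃ l, s = I l ∧ t = J l
    · obtain ⟨l0, h1, h2⟩ := hex
      rw [if_pos ⟨l0, h1, h2⟩, sub_zero,
        Finset.sum_eq_single l0 ?_ (fun h => absurd (Finset.mem_univ l0) h)]
      · subst h1; subst h2; rw [Matrix.single_apply_same]
      · intro l _ hl
        apply Matrix.single_apply_of_ne
        rintro ⟨e1, e2⟩
        exact hl (hdist (show (I l, J l) = (I l0, J l0) by
          rw [e1, e2, ← h1, ← h2]))
    · rw [if_neg hex, sub_self]
      symm
      apply Finset.sum_eq_zero
      intro l _
      apply Matrix.single_apply_of_ne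
      rintro ⟨e1, e2⟩
      exact hex ⟨l, e1.symm, e2.symm⟩
  have hadj : A.adjugate * (A - B) * B.adjugate
      = A.det • B.adjugate - B.det • A.adjugate := by
    calc A.adjugate * (A - B) * B.adjugate
        = (A.adjugate * A) * B.adjugate - A.adjugate * (B * B.adjugate) := by
          noncomm_ring
      _ = A.det • B.adjugate - B.det • A.adjugate := by
          rw [adjugate_mul, mul_adjugate, Matrix.smul_mul, Matrix.one_mul,
            Matrix.mul_smul, Matrix.mul_one]
  have h0 := congrFun (congrFun hadj (J p)) (I p)
  rw [hAB, Finset.mul_sum, Finset.sum_mul] at h0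
  simp only [Matrix.sum_apply, Matrix.sub_apply, Matrix.smul_apply, smul_eq_mul,
    mul_std_mul] at h0
  rw [← Finset.sum_erase_add _ _ (Finset.mem_univ p)] at h0
  have hterm : ∀ l ∈ Finset.univ.erase p,
      (-1 : ℝ) ^ ((I l).val + (J l).val + (I p).val + (J p).val) *
          A (I p) (J p) * A (I l) (J l) *
          (minorRC B (I p) (J l)).det * (minorRC A (I l) (J p)).det
        = A (I p) (J p) *
            (A.adjugate (J p) (I l) * A (I l) (J l) * B.adjugate (J l) (I p)) := by
    intro l _
    rw [adj_eq A (I l) (J p), adj_eq B (I p) (J l)]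
    rw [show ((I l).val + (J l).val + (I p).val + (J p).val)
        = ((I l).val + (J p).val) + ((I p).val + (J l).val) from by omega, pow_add]
    ring
  rw [Finset.sum_congr rfl hterm, ← Finset.mul_sum]
  linear_combination (B.det + A (I p) (J p) * B.adjugate (J p) (I p)) * hdetA
    - Eb.det * hdetEp + A (I p) (J p) * h0
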